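/- arXiv:2605.12600 — 9 statements merged into one kernel-verified Lean document; each statement's English description precedes it below -/
import Mathlib

section
/- Let L ≥ 1, δ ≥ 1, d ≥ 1 be integers. For all x, y ∈ {0,…,L−1}^d with max_{1≤i≤d} |x_i − y_i| ≤ δ, there exist b ∈ {0,1}^d and n ∈ ℤ^d such that both x and y lie in the subgrid I_{2δn₁−δb₁} × ⋯ × I_{2δn_d−δb_d}. (Among the 2^d shifted partitions of the grid into boxes of side 2δ, at least one contains both points in a single box.) -/
/-- The clamped interval `I_j = {k : max(0,j) ≤ k ≤ min(L-1, j+2δ-1)}`. -/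
def clamped (L δ j : ℤ) : Set ℤ :=
  {k : ℤ | max 0 j ≤ k ∧ k ≤ min (L - 1) (j + 2 * δ - 1)}

/-- The subgrid (box) `I_{2δn₁−δb₁} × ⋯ × I_{2δn_d−δb_d}` of `ℤ^d`. -/
def box (L δ : ℤ) (d : ℕ) (b n : Fin d → ℤ) : Set (Fin d → ℤ) :=
  {x | ∀ i, x i ∈ clamped L δ (2 * δ * n i - δ * b i)}

/-!
The box condition splits over coordinates. In one coordinate, `j = δ ⌊min u v / δ⌋` satisfies
`j ≤ min u v ≤ max u v < j + 2δ`, so `u, v ∈ I_j`; and every multiple `δ m` of `δ` has the form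
`2δn − δb` with `b = m mod 2`.
-/

theorem mem_clamped_iff {L δ j k : ℤ} :
    k ∈ clamped L δ j ↔ (0 ≤ k ∧ k ≤ L - 1) ∧ j ≤ k ∧ k ≤ j + 2 * δ - 1 := by
  simp only [clamped, Set.mem_ofPred_eq, max_le_iff, le_min_iff]
  tauto

theorem exists_bit_eq_two_mul_sub (δ m : ℤ) :
    ∃ b n : ℤ, (b = 0 ∨ b = 1) ∧ 2 * δ * n - δ * b = δ * m :=
  ⟨m % 2, m / 2 + m % 2, Int.emod_two_eq_zero_or_one m, by
    linear_combination δ * Int.mul_ediv_add_emod m 2⟩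

theorem exists_mul_le_min_and_max_le {δ u v : ℤ} (hδ : 0 < δ) (huv : |u - v| ≤ δ) :
    ∃ m : ℤ, δ * m ≤ min u v ∧ max u v ≤ δ * m + 2 * δ - 1 := by
  refine ⟨min u v / δ, Int.mul_ediv_self_le hδ.ne', ?_⟩
  have hlt : min u v < δ * (min u v / δ) + δ := Int.lt_mul_ediv_self_add hδ
  linarith [max_sub_min_eq_abs' u v]

theorem exists_mem_clamped_of_abs_sub_le {L δ u v : ℤ} (hδ : 0 < δ)
    (hu : 0 ≤ u ∧ u ≤ L - 1) (hv : 0 ≤ v ∧ v ≤ L - 1) (huv : |u - v| ≤ δ) :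
    ∃ b n : ℤ, (b = 0 ∨ b = 1) ∧
      u ∈ clamped L δ (2 * δ * n - δ * b) ∧ v ∈ clamped L δ (2 * δ * n - δ * b) := by
  obtain ⟨m, hlow, hhigh⟩ := exists_mul_le_min_and_max_le hδ huv
  obtain ⟨b, n, hb, hj⟩ := exists_bit_eq_two_mul_sub δ m
  rw [← hj] at hlow hhigh
  simp only [mem_clamped_iff]
  exact ⟨b, n, hb, ⟨hu, (le_min_iff.mp hlow).1, (max_le_iff.mp hhigh).1⟩,
    ⟨hv, (le_min_iff.mp hlow).2, (max_le_iff.mp hhigh).2⟩⟩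

theorem stmt2_general (L δ : ℤ) (hδ : 1 ≤ δ) (d : ℕ)
    (x y : Fin d → ℤ)
    (hx : ∀ i, 0 ≤ x i ∧ x i ≤ L - 1) (hy : ∀ i, 0 ≤ y i ∧ y i ≤ L - 1)
    (hdist : ∀ i, |x i - y i| ≤ δ) :
    ∃ (b n : Fin d → ℤ), (∀ i, b i = 0 ∨ b i = 1) ∧
      x ∈ box L δ d b n ∧ y ∈ box L δ d b n := by
  choose b n hb hxb hyb using fun i =>
    exists_mem_clamped_of_abs_sub_le (L := L) (by omega) (hx i) (hy i) (hdist i)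
  exact ⟨b, n, hb, hxb, hyb⟩

/-- Any two grid points `x, y ∈ {0,…,L−1}^d` at `ℓ∞`-distance at most `δ` lie in a
common box `I_{2δn₁−δb₁} × ⋯ × I_{2δn_d−δb_d}` for some shift `b ∈ {0,1}^d` and some
`n ∈ ℤ^d`. -/
theorem stmt2 (L δ : ℤ) (hL : 1 ≤ L) (hδ : 1 ≤ δ) (d : ℕ) (hd : 1 ≤ d)
    (x y : Fin d → ℤ)
    (hx : ∀ i, 0 ≤ x i ∧ x i ≤ L - 1) (hy : ∀ i, 0 ≤ y i ∧ y i ≤ L - 1)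
    (hdist : ∀ i, |x i - y i| ≤ δ) :
    ∃ (b n : Fin d → ℤ), (∀ i, b i = 0 ∨ b i = 1) ∧
      x ∈ box L δ d b n ∧ y ∈ box L δ d b n :=
  stmt2_general L δ hδ d x y hx hy hdist
end

section
/- Let L ≥ 1 and let p = (r,c) and p' = (r',c') be points of the grid {0,…,L−1}². Then m_Z(p) < m_Z(p') and m_S(p) > m_S(p') hold simultaneously if and only if p' ∈ Λ_p. (The pairs whose relative order is reversed between the Z-pattern and S-pattern orderings are exactly the pairs (p, p') with p' ∈ Λ_p.) -/
/-!
Both orderings are lexicographic on grid points: `m_Z` compares columns first and then rows in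
decreasing order, `m_S` compares rows first and then positions along the snake, which runs
through row `r` left to right if `r` is even and right to left if `r` is odd. Hence `m_Z` puts
`p'` after `p` while `m_S` puts it before exactly when `p'` lies in a column `≥ c` and either in
an earlier row, or in row `r` itself to the right of `p` with `r` odd.
-/

def rho (L r c : ℕ) : ℕ := if r % 2 = 0 then c else L - 1 - c

def mS (L : ℕ) (p : ℕ × ℕ) : ℕ := L * p.1 + rho L p.1 p.2

def mZ (L : ℕ) (p : ℕ × ℕ) : ℕ := L * p.2 + (L - 1 - p.1)

def Lam (L : ℕ) (p : ℕ × ℕ) : Set (ℕ × ℕ) :=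
  {p' | p'.1 < L ∧ p'.2 < L ∧ p' ≠ p ∧ p.2 ≤ p'.2 ∧
    (if p.1 % 2 = 0 then p'.1 < p.1 else p'.1 ≤ p.1)}

theorem Nat.mul_add_lt_mul_add_iff {L a b x y : ℕ} (hx : x < L) (hy : y < L) :
    L * a + x < L * b + y ↔ a < b ∨ a = b ∧ x < y := by
  constructor
  · intro h
    rcases lt_trichotomy a b with hab | rfl | hab
    · exact .inl hab
    · exact .inr ⟨rfl, by omega⟩
    · have : L * (b + 1) ≤ L * a := Nat.mul_le_mul_left L hab
      rw [mul_add_one] at this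
      omega
  · rintro (hab | ⟨rfl, hxy⟩)
    · have : L * (a + 1) ≤ L * b := Nat.mul_le_mul_left L hab
      rw [mul_add_one] at this
      omega
    · omega

theorem rho_lt {L r c : ℕ} (hc : c < L) : rho L r c < L := by
  unfold rho
  split_ifs <;> omega

theorem rho_lt_rho_iff {L r c c' : ℕ} (hc : c < L) (hc' : c' < L) :
    rho L r c' < rho L r c ↔ if r % 2 = 0 then c' < c else c < c' := by
  unfold rho
  split_ifs <;> omega

theorem mZ_lt_mZ_iff {L : ℕ} {p p' : ℕ × ℕ} (hr : p.1 < L) (hr' : p'.1 < L) :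
    mZ L p < mZ L p' ↔ p.2 < p'.2 ∨ p.2 = p'.2 ∧ p'.1 < p.1 := by
  rw [mZ, mZ, Nat.mul_add_lt_mul_add_iff (by omega) (by omega)]
  omega

theorem mS_lt_mS_iff {L : ℕ} {p p' : ℕ × ℕ} (hc : p.2 < L) (hc' : p'.2 < L) :
    mS L p' < mS L p ↔
      p'.1 < p.1 ∨ p'.1 = p.1 ∧ if p.1 % 2 = 0 then p'.2 < p.2 else p.2 < p'.2 := by
  rw [mS, mS, Nat.mul_add_lt_mul_add_iff (rho_lt hc') (rho_lt hc)]
  refine or_congr_right (and_congr_right fun hr => ?_)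
  rw [hr]
  exact rho_lt_rho_iff hc hc'

theorem stmt5_general (L : ℕ) (p p' : ℕ × ℕ)
    (hp : p.1 < L ∧ p.2 < L) (hp' : p'.1 < L ∧ p'.2 < L) :
    (mZ L p < mZ L p' ∧ mS L p' < mS L p) ↔ p' ∈ Lam L p := by
  rw [mZ_lt_mZ_iff hp.1 hp'.1, mS_lt_mS_iff hp.2 hp'.2, Lam, Set.mem_ofPred_eq, Ne, Prod.ext_iff]
  split_ifs <;> omega

/-- The pairs of grid points whose relative order is reversed between the Z-pattern
and S-pattern orderings are exactly the pairs `(p, p')` with `p' ∈ Λ_p`. -/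
theorem stmt5 (L : ℕ) (hL : 1 ≤ L) (p p' : ℕ × ℕ)
    (hp : p.1 < L ∧ p.2 < L) (hp' : p'.1 < L ∧ p'.2 < L) :
    (mZ L p < mZ L p' ∧ mS L p' < mS L p) ↔ p' ∈ Lam L p :=
  stmt5_general L p p' hp hp'
end

section
/- Let L ≥ 1 be an odd integer. For every function x : {0,…,L−1}² → 𝔽₂ (i.e. ZMod 2), the following identity holds in 𝔽₂: ∑_{r odd, 1≤r≤L−2} ∑_{c=0}^{L−1} ( ∑_{r'=r}^{L−1} x(r',c) ) · ( ∑_{c'=c}^{L−1} ( x(r−1,c') + x(r,c') ) ) = ∑_{p ∈ {0,…,L−1}²} ∑_{p' ∈ Λ_p} x(p)·x(p') + ∑_{r odd, 1≤r≤L−2} ∑_{c=0}^{L−1} x(r,c). (This 𝔽₂ identity is the algebraic core of the fact that the circuit C_{2D}, built from column-and-row parity sums with controlled-Z gates at crossings, applies exactly the CZ phase pattern required to switch between the Z-pattern and S-pattern Jordan–Wigner orderings, up to single-qubit Z gates on odd rows.) -/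
/-!
Swapping the sums, the coefficient of `x p` on the left, `p = (a, b)`, is the sum of `x` over
rows `r - 1, r` (`r` odd, `r ≤ a`) and columns `≥ b`. These row pairs tile rows `0, …, a - 1`,
together with row `a` itself when `a` is odd, so the coefficient is the sum of `x` over `Λ_p`,
plus `x p` when `a` is odd; since `x p * x p = x p` in `𝔽₂`, that extra term is the correction
on odd rows.
-/

/-- `Λ_p` as a finite set: for `p = (r,c)`, the grid points `(r',c') ≠ (r,c)` with
`c' ≥ c` and `r' < r` if `r` is even, `r' ≤ r` if `r` is odd. -/
def LamF (L : ℕ) (p : ℕ × ℕ) : Finset (ℕ × ℕ) :=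
  (Finset.range L ×ˢ Finset.range L).filter fun p' =>
    p' ≠ p ∧ p.2 ≤ p'.2 ∧ (if p.1 % 2 = 0 then p'.1 < p.1 else p'.1 ≤ p.1)

open Finset

theorem sum_filter_odd_range_two_mul_add_pred {M : Type*} [AddCommMonoid M] (y : ℕ → M)
    (k : ℕ) :
    ∑ r ∈ (range (2 * k)).filter (· % 2 = 1), (y (r - 1) + y r) = ∑ r ∈ range (2 * k), y r := by
  induction k with
  | zero => simp
  | succ k ih =>
    rw [show 2 * (k + 1) = 2 * k + 1 + 1 by ring, range_add_one, range_add_one, filter_insert,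
      if_pos (by omega), filter_insert, if_neg (by omega), sum_insert (by simp),
      sum_insert (by simp), sum_insert (by simp), Nat.add_sub_cancel, ih, add_assoc, add_left_comm]

theorem filter_odd_Icc_one_sub_two {L : ℕ} (hL : L % 2 = 1) :
    (Icc 1 (L - 2)).filter (· % 2 = 1) = (range L).filter (· % 2 = 1) := by
  ext r
  simp only [mem_filter, mem_Icc, mem_range]
  omega

theorem sum_sum_sum_Icc_mul {R : Type*} [NonUnitalNonAssocSemiring R] {L : ℕ} (hL : 1 ≤ L)
    (s t : Finset ℕ) (f g : ℕ → ℕ → R) :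
    ∑ r ∈ s, ∑ c ∈ t, (∑ r' ∈ Icc r (L - 1), f r' c) * g r c =
      ∑ r' ∈ range L, ∑ c ∈ t, f r' c * ∑ r ∈ s.filter (· ≤ r'), g r c := by
  have hIcc (r : ℕ) : Icc r (L - 1) = (range L).filter (r ≤ ·) := by
    ext r'
    simp only [mem_Icc, mem_filter, mem_range]
    omega
  simp only [hIcc, sum_filter, sum_mul, mul_sum, mul_ite, ite_mul, mul_zero, zero_mul]
  rw [sum_comm]
  refine (sum_congr rfl fun c _ => sum_comm).trans ?_
  rw [sum_comm]

theorem filter_le_filter_odd_range {L p : ℕ} (hp : p < L) :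
    ((range L).filter (· % 2 = 1)).filter (· ≤ p) =
      (range (2 * ((p + 1) / 2))).filter (· % 2 = 1) := by
  ext r
  simp only [mem_filter, mem_range]
  omega

theorem LamF_eq_erase {L p q : ℕ} (hp : p < L) :
    LamF L (p, q) = (range (2 * ((p + 1) / 2)) ×ˢ Icc q (L - 1)).erase (p, q) := by
  ext ⟨a, b⟩
  simp only [LamF, mem_filter, mem_erase, mem_product, mem_range, mem_Icc]
  split_ifs <;> grind

theorem mk_mem_range_product_Icc_iff {L p q : ℕ} (hq : q < L) :
    (p, q) ∈ range (2 * ((p + 1) / 2)) ×ˢ Icc q (L - 1) ↔ p % 2 = 1 := by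
  simp only [mem_product, mem_range, mem_Icc]
  omega

theorem mul_sum_odd_rows_eq_sum_LamF_add (x : ℕ × ℕ → ZMod 2) {L p q : ℕ} (hp : p < L)
    (hq : q < L) :
    x (p, q) * ∑ r ∈ ((range L).filter (· % 2 = 1)).filter (· ≤ p),
        ∑ c ∈ Icc q (L - 1), (x (r - 1, c) + x (r, c)) =
      ∑ v ∈ LamF L (p, q), x (p, q) * x v + if p % 2 = 1 then x (p, q) else 0 := by
  have hrect : ∑ r ∈ ((range L).filter (· % 2 = 1)).filter (· ≤ p),
      ∑ c ∈ Icc q (L - 1), (x (r - 1, c) + x (r, c)) =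
        ∑ v ∈ range (2 * ((p + 1) / 2)) ×ˢ Icc q (L - 1), x v := by
    rw [filter_le_filter_odd_range hp, sum_comm, sum_product_right]
    exact sum_congr rfl fun c _ => sum_filter_odd_range_two_mul_add_pred (fun r => x (r, c)) _
  rw [hrect, LamF_eq_erase hp, ← mul_sum]
  split_ifs with hodd
  · rw [← sum_erase_add _ _ ((mk_mem_range_product_Icc_iff hq).2 hodd), mul_add, ← sq,
      ZMod.pow_card]
  · rw [erase_eq_of_notMem (mt (mk_mem_range_product_Icc_iff hq).1 hodd), add_zero]

theorem stmt6_general (L : ℕ) (hLodd : L % 2 = 1)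
    (x : ℕ × ℕ → ZMod 2) :
    (∑ r ∈ (Finset.Icc 1 (L - 2)).filter (fun r => r % 2 = 1),
      ∑ c ∈ Finset.range L,
        (∑ r' ∈ Finset.Icc r (L - 1), x (r', c)) *
        (∑ c' ∈ Finset.Icc c (L - 1), (x (r - 1, c') + x (r, c')))) =
    (∑ p ∈ Finset.range L ×ˢ Finset.range L, ∑ p' ∈ LamF L p, x p * x p') +
    (∑ r ∈ (Finset.Icc 1 (L - 2)).filter (fun r => r % 2 = 1),
      ∑ c ∈ Finset.range L, x (r, c)) := by
  rw [filter_odd_Icc_one_sub_two hLodd, sum_sum_sum_Icc_mul (by omega), sum_product, sum_filter,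
    ← sum_add_distrib]
  refine sum_congr rfl fun p hp => ?_
  rw [sum_congr rfl fun q hq =>
      mul_sum_odd_rows_eq_sum_LamF_add x (mem_range.1 hp) (mem_range.1 hq),
    sum_add_distrib, sum_ite_irrel, sum_const_zero]

/-- The 𝔽₂ identity underlying the fact that the circuit `C_{2D}` applies exactly the
CZ phase pattern needed to switch between the Z-pattern and S-pattern Jordan–Wigner
orderings, up to single-qubit Z gates on odd rows: for odd `L` and any
`x : {0,…,L−1}² → 𝔽₂`,
`∑_{r odd} ∑_c (∑_{r'≥r} x(r',c)) · (∑_{c'≥c} (x(r−1,c') + x(r,c')))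
  = ∑_p ∑_{p' ∈ Λ_p} x(p)·x(p') + ∑_{r odd} ∑_c x(r,c)`. -/
theorem stmt6 (L : ℕ) (hL : 1 ≤ L) (hLodd : L % 2 = 1)
    (x : ℕ × ℕ → ZMod 2) :
    (∑ r ∈ (Finset.Icc 1 (L - 2)).filter (fun r => r % 2 = 1),
      ∑ c ∈ Finset.range L,
        (∑ r' ∈ Finset.Icc r (L - 1), x (r', c)) *
        (∑ c' ∈ Finset.Icc c (L - 1), (x (r - 1, c') + x (r, c')))) =
    (∑ p ∈ Finset.range L ×ˢ Finset.range L, ∑ p' ∈ LamF L p, x p * x p') +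
    (∑ r ∈ (Finset.Icc 1 (L - 2)).filter (fun r => r % 2 = 1),
      ∑ c ∈ Finset.range L, x (r, c)) :=
  stmt6_general L hLodd x
end

section
/- Let L ≥ 1 and let 𝒞 = (C₁,…,C_K) be an interval partition of {0,…,L−1} into consecutive blocks. Then the boustrophedon ordering m_𝒞 is a bijection from the grid {0,…,L−1}² onto {0,…,L²−1}. -/
/-! Inside the block `C_j`, writing `ρ = ρ_r(c - a_j)`, the map is `(r, c) ↦ L a_j + w_j r + ρ`:
for each row `r` the reflection `ρ_r` permutes `{0, …, w_j − 1}`, and `(r, ρ) ↦ w_j r + ρ` is the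
row-major enumeration of `{0, …, L−1} × {0, …, w_j − 1}`. So block `j` fills exactly the window
`[L a_j, L a_{j+1})`, and these windows tile `[0, L²)` as the blocks tile the columns. -/

/-- `ρ^{(w)}_r(c) = c` for even `r` and `w−1−c` for odd `r`. -/
def rhoW (w r c : ℕ) : ℕ := if r % 2 = 0 then c else w - 1 - c

open Set

lemma rhoW_lt {w r c : ℕ} (hc : c < w) : rhoW w r c < w := by
  unfold rhoW; split <;> omega

lemma rhoW_rhoW {w r c : ℕ} (hc : c < w) : rhoW w r (rhoW w r c) = c := by
  unfold rhoW; split <;> omega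

theorem Set.BijOn.union_of_disjoint {α β : Type*} {f : α → β} {s₁ s₂ : Set α} {t₁ t₂ : Set β}
    (h₁ : BijOn f s₁ t₁) (h₂ : BijOn f s₂ t₂) (ht : Disjoint t₁ t₂) :
    BijOn f (s₁ ∪ s₂) (t₁ ∪ t₂) := by
  have hne : ∀ x ∈ s₁, ∀ y ∈ s₂, f x ≠ f y := fun x hx y hy hxy =>
    ht.ne_of_mem (h₁.mapsTo hx) (h₂.mapsTo hy) hxy
  have hs : Disjoint s₁ s₂ := Set.disjoint_left.2 fun x hx₁ hx₂ => hne x hx₁ x hx₂ rfl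
  exact h₁.union h₂ ((injOn_union hs).2 ⟨h₁.injOn, h₂.injOn, hne⟩)

lemma bijOn_rowMajor (base w L : ℕ) :
    BijOn (fun p : ℕ × ℕ => base + w * p.1 + p.2) {p | p.1 < L ∧ p.2 < w}
      (Ico base (base + w * L)) := by
  refine InvOn.bijOn (f' := fun k => ((k - base) / w, (k - base) % w)) ⟨?_, ?_⟩ ?_ ?_
  · rintro ⟨r, ρ⟩ ⟨-, hρ⟩
    have hw : 0 < w := by omega
    simp only [Prod.mk.injEq, add_assoc, Nat.add_sub_cancel_left]
    exact ⟨by rw [Nat.mul_add_div hw, Nat.div_eq_of_lt hρ, add_zero],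
      by rw [Nat.mul_add_mod, Nat.mod_eq_of_lt hρ]⟩
  · intro k hk
    have := Nat.div_add_mod (k - base) w
    simp only [mem_Ico] at hk ⊢
    omega
  · rintro ⟨r, ρ⟩ ⟨hr, hρ⟩
    have : w * (r + 1) ≤ w * L := Nat.mul_le_mul_left w hr
    simp only [mem_Ico]
    constructor <;> nlinarith
  · intro k hk
    simp only [mem_Ico] at hk
    have hw : 0 < w := Nat.pos_of_ne_zero (by rintro rfl; omega)
    exact ⟨(Nat.div_lt_iff_lt_mul hw).2 (by rw [mul_comm]; omega), Nat.mod_lt _ hw⟩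

lemma bijOn_reflectColumns (a w L : ℕ) :
    BijOn (fun p : ℕ × ℕ => (p.1, rhoW w p.1 (p.2 - a))) {p | p.1 < L ∧ p.2 ∈ Ico a (a + w)}
      {p | p.1 < L ∧ p.2 < w} := by
  refine InvOn.bijOn (f' := fun p => (p.1, a + rhoW w p.1 p.2)) ⟨?_, ?_⟩ ?_ ?_ <;>
    rintro ⟨r, c⟩ ⟨hr, hc⟩ <;> simp only [mem_Ico] at hc
  · simp [rhoW_rhoW (show c - a < w by omega), hc.1]
  · simp [rhoW_rhoW hc]
  · exact ⟨hr, rhoW_lt (by omega)⟩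
  · exact ⟨hr, by simp, by simpa using rhoW_lt hc⟩

lemma bijOn_boustrophedon_block {f : ℕ × ℕ → ℕ} {L a w base : ℕ}
    (hf : ∀ r c, a ≤ c → c < a + w → f (r, c) = base + w * r + rhoW w r (c - a)) :
    BijOn f {p | p.1 < L ∧ p.2 ∈ Ico a (a + w)} (Ico base (base + w * L)) :=
  ((bijOn_rowMajor base w L).comp (bijOn_reflectColumns a w L)).congr
    fun p hp => (hf p.1 p.2 hp.2.1 hp.2.2).symm

lemma bijOn_boustrophedon_prefix {L K : ℕ} {a w : ℕ → ℕ} (ha0 : a 0 = 0)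
    (hstep : ∀ j < K, a (j + 1) = a j + w j) {mC : ℕ × ℕ → ℕ}
    (hmC : ∀ j < K, ∀ r c : ℕ, a j ≤ c → c < a (j + 1) →
      mC (r, c) = L * a j + w j * r + rhoW (w j) r (c - a j)) :
    ∀ n ≤ K, BijOn mC {p | p.1 < L ∧ p.2 < a n} (Iio (L * a n)) := by
  intro n
  induction n with
  | zero => simp [ha0]
  | succ n ih =>
    intro hn
    have hstep_n := hstep n hn
    have hblock : BijOn mC {p | p.1 < L ∧ p.2 ∈ Ico (a n) (a n + w n)}
        (Ico (L * a n) (L * a n + w n * L)) :=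
      bijOn_boustrophedon_block fun r c h₁ h₂ => hmC n hn r c h₁ (hstep_n ▸ h₂)
    have hcols : {p : ℕ × ℕ | p.1 < L ∧ p.2 < a (n + 1)} =
        {p | p.1 < L ∧ p.2 < a n} ∪ {p | p.1 < L ∧ p.2 ∈ Ico (a n) (a n + w n)} := by
      ext p
      simp only [mem_ofPred_eq, mem_union, mem_Ico, hstep_n]
      omega
    have hwindow : Iio (L * a (n + 1)) = Iio (L * a n) ∪ Ico (L * a n) (L * a n + w n * L) := by
      rw [Iio_union_Ico_eq_Iio (Nat.le_add_right _ _), hstep_n]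
      ring_nf
    rw [hcols, hwindow]
    exact (ih (by omega)).union_of_disjoint hblock
      ((Iio_disjoint_Ici le_rfl).mono_right Ico_subset_Ici_self)

theorem stmt8_general (L K : ℕ)
    (a w : ℕ → ℕ) (ha0 : a 0 = 0) (haK : a K = L)
    (hstep : ∀ j < K, a (j + 1) = a j + w j)
    (mC : ℕ × ℕ → ℕ)
    (hmC : ∀ j < K, ∀ r c : ℕ, a j ≤ c → c < a (j + 1) →
      mC (r, c) = L * a j + w j * r + rhoW (w j) r (c - a j)) :
    Set.BijOn mC {p : ℕ × ℕ | p.1 < L ∧ p.2 < L} {k : ℕ | k < L ^ 2} := by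
  have h := bijOn_boustrophedon_prefix ha0 hstep hmC K le_rfl
  rwa [haK, ← sq] at h

/-- Let `𝒞 = (C₁,…,C_K)` be an interval partition of the columns `{0,…,L−1}`, given
by block starts `a j` and widths `w j` (blocks are `C_j = {a j, …, a j + w j − 1}`
with `a 0 = 0`, `a (j+1) = a j + w j` and `a K = L`).  Any function `mC` satisfying
the boustrophedon formula `mC (r,c) = L·a_j + w_j·r + ρ^{(w_j)}_r(c − a_j)` for
`c ∈ C_j` is a bijection from the grid `{0,…,L−1}²` onto `{0,…,L²−1}`. -/
theorem stmt8 (L K : ℕ) (hL : 1 ≤ L) (hK : 1 ≤ K)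
    (a w : ℕ → ℕ) (ha0 : a 0 = 0) (haK : a K = L)
    (hw : ∀ j < K, 1 ≤ w j) (hstep : ∀ j < K, a (j + 1) = a j + w j)
    (mC : ℕ × ℕ → ℕ)
    (hmC : ∀ j < K, ∀ r c : ℕ, a j ≤ c → c < a (j + 1) →
      mC (r, c) = L * a j + w j * r + rhoW (w j) r (c - a j)) :
    Set.BijOn mC {p : ℕ × ℕ | p.1 < L ∧ p.2 < L} {k : ℕ | k < L ^ 2} :=
  stmt8_general L K a w ha0 haK hstep mC hmC
end

section
/- Let L ≥ 1 and δ ≥ 1. Let 𝒞₀ be the interval partition of {0,…,L−1} whose blocks are the nonempty clamped intervals I_{2δn} (n ≥ 0), and 𝒞₁ the one whose blocks are the nonempty clamped intervals I_{2δn−δ} (n ≥ 0). Then for all points p, q ∈ {0,…,L−1}² with max(|p₁−q₁|, |p₂−q₂|) ≤ δ, there exist j ∈ {0,1}, a block C of 𝒞_j, and a row interval R = I_{2δm−δb} (for some m ∈ ℤ, b ∈ {0,1}) such that p, q ∈ R × C; consequently, p and q lie on a common subgrid through which the boustrophedon ordering m_{𝒞_j} follows a Hamiltonian path, since its image m_{𝒞_j}(R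 × C) is a set of consecutive integers and points with consecutive ranks in R × C are grid nearest neighbors. (Two complementary boustrophedon encodings suffice to make every pair of fermionic modes at ℓ∞-distance at most δ adjacent along an encoding within a constant-size subgrid.) -/
/-- The start `a` of the clamped interval `I_{2δn−δj}` (as a natural number). -/
def blockStart (δ j : ℕ) (n : ℤ) : ℕ :=
  (max 0 (2 * (δ : ℤ) * n - (δ : ℤ) * (j : ℤ))).toNat

/-- The width `w` of the clamped interval `I_{2δn−δj}` (when nonempty). -/
def blockWidth (L δ j : ℕ) (n : ℤ) : ℕ :=
  (min ((L : ℤ) - 1) (2 * (δ : ℤ) * n - (δ : ℤ) * (j : ℤ) + 2 * (δ : ℤ) - 1)).toNat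
    - blockStart δ j n + 1

/-!
Two integers at distance at most `δ` both lie in `[δk, δk + 2δ)` for
`k = ⌊min/δ⌋`, and `δk` is of the form `2δn` or `2δn − δ` according to the parity of `k`;
this places both coordinates of `p` and `q` in a common row interval and a common column
block. Inside a block of width `w` the boustrophedon rank is `L·a + w·r + ρ_r(c − a)`
with `ρ_r` a bijection of `[0, w)`, so rows `[s, s + h)` are sent onto `[L·a + w·s,
L·a + w·(s + h))`; consecutive ranks either stay in a row and move one column, or pass
to the next row, where the reversed direction keeps the column.
-/

open Set

section Boustrophedon

lemma abs_sub_add_abs_sub_eq_one_of_rank_succ {w r r' e e' : ℕ} (he : e < w) (he' : e' < w)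
    (h : w * r' + rhoW w r' e' = w * r + rhoW w r e + 1) :
    |(r : ℤ) - r'| + |(e : ℤ) - e'| = 1 := by
  have hρ := rhoW_lt (r := r) he
  have hρ' := rhoW_lt (r := r') he'
  have hr : r ≤ r' := by
    by_contra! hlt
    have : w * (r' + 1) ≤ w * r := Nat.mul_le_mul_left w hlt
    linarith
  have hr' : r' ≤ r + 1 := by
    by_contra! hlt
    have : w * (r + 2) ≤ w * r' := Nat.mul_le_mul_left w hlt
    linarith
  obtain rfl | rfl : r = r' ∨ r' = r + 1 := by omega
  · have hstep : rhoW w r e' = rhoW w r e + 1 := by omega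
    unfold rhoW at hstep
    rw [sub_self, abs_zero, zero_add, abs_eq zero_le_one]
    split_ifs at hstep <;> omega
  · have hturn : w + rhoW w (r + 1) e' = rhoW w r e + 1 := by rw [mul_add_one] at h; omega
    -- the direction reverses from one row to the next, so the column is kept
    obtain rfl : e = e' := by unfold rhoW at hturn; split_ifs at hturn <;> omega
    simp

variable {L a w : ℕ} {f : ℕ × ℕ → ℕ}
  (hf : ∀ r c, a ≤ c → c < a + w → f (r, c) = L * a + w * r + rhoW w r (c - a))
include hf

lemma image_Ico_prod_Ico_of_boustrophedon (s h : ℕ) :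
    f '' (Ico s (s + h) ×ˢ Ico a (a + w)) = Ico (L * a + w * s) (L * a + w * (s + h)) := by
  ext k
  constructor
  · rintro ⟨⟨r, c⟩, ⟨⟨hsr, hrh⟩, hac, hcw⟩, rfl⟩
    rw [hf r c hac hcw]
    have hρ := rhoW_lt (r := r) (by omega : c - a < w)
    have hlo : w * s ≤ w * r := Nat.mul_le_mul_left w hsr
    have hhi : w * (r + 1) ≤ w * (s + h) := Nat.mul_le_mul_left w hrh
    constructor <;> linarith
  · rintro ⟨hlo, hhi⟩
    have hw : 0 < w := Nat.pos_of_ne_zero fun hw => by simp [hw] at hhi; omega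
    set r := (k - L * a) / w
    have hmod := Nat.mod_lt (k - L * a) hw
    refine ⟨(r, a + rhoW w r ((k - L * a) % w)), ⟨⟨?_, ?_⟩, ?_, ?_⟩, ?_⟩
    · exact (Nat.le_div_iff_mul_le hw).2 (by rw [Nat.mul_comm s w]; omega)
    · exact (Nat.div_lt_iff_lt_mul hw).2 (by rw [Nat.mul_comm (s + h) w]; omega)
    · omega
    · have := rhoW_lt (r := r) hmod; omega
    · rw [hf _ _ (by omega) (by have := rhoW_lt (r := r) hmod; omega), Nat.add_sub_cancel_left,
        rhoW_rhoW hmod, add_assoc, Nat.div_add_mod]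
      omega

lemma abs_sub_add_abs_sub_eq_one_of_boustrophedon {p q : ℕ × ℕ} (hp : p.2 ∈ Ico a (a + w))
    (hq : q.2 ∈ Ico a (a + w)) (hpq : f q = f p + 1) :
    |(p.1 : ℤ) - q.1| + |(p.2 : ℤ) - q.2| = 1 := by
  obtain ⟨r, c⟩ := p
  obtain ⟨r', c'⟩ := q
  obtain ⟨hac, hcw⟩ := hp
  obtain ⟨hac', hcw'⟩ := hq
  rw [hf r c hac hcw, hf r' c' hac' hcw', add_assoc, add_assoc, add_assoc,
    Nat.add_left_cancel_iff] at hpq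
  have := abs_sub_add_abs_sub_eq_one_of_rank_succ (by omega) (by omega) hpq
  simpa [Nat.cast_sub hac, Nat.cast_sub hac'] using this

end Boustrophedon

section Clamped

lemma blockWidth_pos (L δ j : ℕ) (n : ℤ) : 0 < blockWidth L δ j n :=
  Nat.succ_pos _

lemma exists_mem_clamped_of_abs_sub_le_s10 {L δ x y : ℕ} (hδ : 1 ≤ δ) (hx : x < L) (hy : y < L)
    (hxy : |(x : ℤ) - y| ≤ δ) :
    ∃ j : ℕ, j ≤ 1 ∧ ∃ n : ℤ,
      (x : ℤ) ∈ clamped L δ (2 * δ * n - δ * j) ∧ (y : ℤ) ∈ clamped L δ (2 * δ * n - δ * j) := by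
  obtain ⟨hxy, hyx⟩ := abs_sub_le_iff.mp hxy
  obtain ⟨k, hlo, hhi⟩ : ∃ k : ℤ, δ * k ≤ min (x : ℤ) y ∧ min (x : ℤ) y < δ * k + δ := by
    refine ⟨min (x : ℤ) y / δ, Int.mul_ediv_self_le (by omega), ?_⟩
    have := Int.emod_lt_of_pos (min (x : ℤ) y) (by omega : (0 : ℤ) < δ)
    have := Int.mul_ediv_add_emod (min (x : ℤ) y) δ
    omega
  have hmem : ∀ j : ℕ, ∀ n : ℤ, 2 * δ * n - δ * j = δ * k →
      (x : ℤ) ∈ clamped L δ (2 * δ * n - δ * j) ∧ (y : ℤ) ∈ clamped L δ (2 * δ * n - δ * j) := by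
    intro j n hk
    simp only [clamped, hk, mem_ofPred_eq]
    omega
  rcases Int.even_or_odd k with ⟨n, hn⟩ | ⟨n, hn⟩
  · exact ⟨0, zero_le_one, n, hmem 0 n (by rw [hn]; push_cast; ring)⟩
  · exact ⟨1, le_rfl, n + 1, hmem 1 (n + 1) (by rw [hn]; push_cast; ring)⟩

variable {L δ j : ℕ} {n : ℤ} {c₀ : ℕ} (hc₀ : (c₀ : ℤ) ∈ clamped L δ (2 * δ * n - δ * j))
include hc₀

lemma mem_clamped_iff_mem_Ico (c : ℕ) :
    (c : ℤ) ∈ clamped L δ (2 * δ * n - δ * j) ↔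
      c ∈ Ico (blockStart δ j n) (blockStart δ j n + blockWidth L δ j n) := by
  simp only [clamped, blockStart, blockWidth, mem_ofPred_eq, mem_Ico] at hc₀ ⊢
  omega

end Clamped

theorem stmt10_general (L δ : ℕ) (hδ : 1 ≤ δ)
    (mC : ℕ → ℕ × ℕ → ℕ)
    (hmC : ∀ j : ℕ, j ≤ 1 → ∀ n : ℤ, ∀ r c : ℕ,
      ((c : ℤ) ∈ clamped L δ (2 * (δ : ℤ) * n - (δ : ℤ) * (j : ℤ))) →
      mC j (r, c) = L * blockStart δ j n + blockWidth L δ j n * r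
        + rhoW (blockWidth L δ j n) r (c - blockStart δ j n))
    (p q : ℕ × ℕ) (hp : p.1 < L ∧ p.2 < L) (hq : q.1 < L ∧ q.2 < L)
    (hdist : max |(p.1 : ℤ) - (q.1 : ℤ)| |(p.2 : ℤ) - (q.2 : ℤ)| ≤ (δ : ℤ)) :
    ∃ j : ℕ, j ≤ 1 ∧ ∃ b : ℕ, b ≤ 1 ∧ ∃ m n : ℤ, ∃ R C : Set ℤ,
      R = clamped L δ (2 * (δ : ℤ) * m - (δ : ℤ) * (b : ℤ)) ∧
      C = clamped L δ (2 * (δ : ℤ) * n - (δ : ℤ) * (j : ℤ)) ∧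
      ((p.1 : ℤ) ∈ R ∧ (q.1 : ℤ) ∈ R ∧ (p.2 : ℤ) ∈ C ∧ (q.2 : ℤ) ∈ C) ∧
      (∃ s t : ℕ, mC j '' {p' : ℕ × ℕ | (p'.1 : ℤ) ∈ R ∧ (p'.2 : ℤ) ∈ C} =
        Set.Icc s t) ∧
      (∀ p' q' : ℕ × ℕ,
        ((p'.1 : ℤ) ∈ R ∧ (p'.2 : ℤ) ∈ C) → ((q'.1 : ℤ) ∈ R ∧ (q'.2 : ℤ) ∈ C) →
        mC j q' = mC j p' + 1 →
        |(p'.1 : ℤ) - (q'.1 : ℤ)| + |(p'.2 : ℤ) - (q'.2 : ℤ)| = 1) := by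
  obtain ⟨j, hj, n, hpC, hqC⟩ :=
    exists_mem_clamped_of_abs_sub_le_s10 hδ hp.2 hq.2 ((le_max_right _ _).trans hdist)
  obtain ⟨b, hb, m, hpR, hqR⟩ :=
    exists_mem_clamped_of_abs_sub_le_s10 hδ hp.1 hq.1 ((le_max_left _ _).trans hdist)
  have hC := mem_clamped_iff_mem_Ico hpC
  have hR := mem_clamped_iff_mem_Ico hpR
  have hf : ∀ r c, blockStart δ j n ≤ c → c < blockStart δ j n + blockWidth L δ j n →
      mC j (r, c) = _ := fun r c hlo hhi => hmC j hj n r c ((hC c).2 ⟨hlo, hhi⟩)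
  have hgrid : {p' : ℕ × ℕ | (p'.1 : ℤ) ∈ clamped L δ (2 * δ * m - δ * b) ∧
      (p'.2 : ℤ) ∈ clamped L δ (2 * δ * n - δ * j)} =
      Ico (blockStart δ b m) (blockStart δ b m + blockWidth L δ b m) ×ˢ
        Ico (blockStart δ j n) (blockStart δ j n + blockWidth L δ j n) :=
    ext fun p' => and_congr (hR p'.1) (hC p'.2)
  refine ⟨j, hj, b, hb, m, n, _, _, rfl, rfl, ⟨hpR, hqR, hpC, hqC⟩, ?_, ?_⟩
  · rw [hgrid, image_Ico_prod_Ico_of_boustrophedon hf]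
    have hpos := Nat.mul_pos (blockWidth_pos L δ j n)
      (Nat.add_pos_right (blockStart δ b m) (blockWidth_pos L δ b m))
    have hnotMin : ¬IsMin (L * blockStart δ j n +
        blockWidth L δ j n * (blockStart δ b m + blockWidth L δ b m)) := by
      rw [isMin_iff_eq_bot]
      exact (hpos.trans_le le_add_self).ne'
    exact ⟨_, _, (Icc_sub_one_right_eq_Ico_of_not_isMin hnotMin _).symm⟩
  · rintro p' q' ⟨-, hp'⟩ ⟨-, hq'⟩ hstep
    exact abs_sub_add_abs_sub_eq_one_of_boustrophedon hf ((hC _).1 hp') ((hC _).1 hq') hstep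

/-- Two complementary boustrophedon encodings suffice for locality: `𝒞₀` is the
interval partition of the columns `{0,…,L−1}` into the nonempty clamped intervals
`I_{2δn}`, and `𝒞₁` the one into the nonempty intervals `I_{2δn−δ}`; `mC j` is the
boustrophedon ordering associated with `𝒞_j` (characterized blockwise by the
boustrophedon formula).  Then any two grid points `p, q` at `ℓ∞`-distance at most
`δ` lie in a common subgrid `R × C`, where `C = I_{2δn−δj}` is a block of `𝒞_j`
(for some `j ∈ {0,1}`) and `R = I_{2δm−δb}` is a row interval; moreover `m_{𝒞_j}`
follows a Hamiltonian path through `R × C`: its image on `R × C` is a set of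
consecutive integers, and points of `R × C` with consecutive ranks are grid
nearest neighbors. -/
theorem stmt10 (L δ : ℕ) (hL : 1 ≤ L) (hδ : 1 ≤ δ)
    (mC : ℕ → ℕ × ℕ → ℕ)
    (hmC : ∀ j : ℕ, j ≤ 1 → ∀ n : ℤ, ∀ r c : ℕ,
      ((c : ℤ) ∈ clamped L δ (2 * (δ : ℤ) * n - (δ : ℤ) * (j : ℤ))) →
      mC j (r, c) = L * blockStart δ j n + blockWidth L δ j n * r
        + rhoW (blockWidth L δ j n) r (c - blockStart δ j n))
    (p q : ℕ × ℕ) (hp : p.1 < L ∧ p.2 < L) (hq : q.1 < L ∧ q.2 < L)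
    (hdist : max |(p.1 : ℤ) - (q.1 : ℤ)| |(p.2 : ℤ) - (q.2 : ℤ)| ≤ (δ : ℤ)) :
    ∃ j : ℕ, j ≤ 1 ∧ ∃ b : ℕ, b ≤ 1 ∧ ∃ m n : ℤ, ∃ R C : Set ℤ,
      R = clamped L δ (2 * (δ : ℤ) * m - (δ : ℤ) * (b : ℤ)) ∧
      C = clamped L δ (2 * (δ : ℤ) * n - (δ : ℤ) * (j : ℤ)) ∧
      ((p.1 : ℤ) ∈ R ∧ (q.1 : ℤ) ∈ R ∧ (p.2 : ℤ) ∈ C ∧ (q.2 : ℤ) ∈ C) ∧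
      (∃ s t : ℕ, mC j '' {p' : ℕ × ℕ | (p'.1 : ℤ) ∈ R ∧ (p'.2 : ℤ) ∈ C} =
        Set.Icc s t) ∧
      (∀ p' q' : ℕ × ℕ,
        ((p'.1 : ℤ) ∈ R ∧ (p'.2 : ℤ) ∈ C) → ((q'.1 : ℤ) ∈ R ∧ (q'.2 : ℤ) ∈ C) →
        mC j q' = mC j p' + 1 →
        |(p'.1 : ℤ) - (q'.1 : ℤ)| + |(p'.2 : ℤ) - (q'.2 : ℤ)| = 1) :=
  stmt10_general L δ hδ mC hmC p q hp hq hdist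
end

section
/- Let L ≥ 1 and let 0 ≤ r, c ≤ L−1 and p be any integer. Then ρ^{(L²)}_p( L·r + ρ^{(L)}_r(c) ) = L·ρ^{(L)}_p(r) + ρ^{(L)}_{p+r}(c). In particular, the three-dimensional snake ordering defined recursively by m_S^{3D}(c,r,p) := ρ^{(L²)}_p( m_S^{2D}(r,c) ) + L²·p admits the closed form m_S^{3D}(c,r,p) = ρ^{(L)}_{p+r}(c) + L·ρ^{(L)}_p(r) + L²·p. -/
/-- `ρ^{(w)}_r(c) = c` for even `r` and `w−1−c` for odd `r`, with integer subscript. -/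
def rhoI (w : ℕ) (r : ℤ) (c : ℕ) : ℕ := if Even r then c else w - 1 - c

/-- The two-dimensional S-pattern ordering `m_S^{2D}(r,c) = L·r + ρ^{(L)}_r(c)`. -/
def mS2 (L r c : ℕ) : ℕ := L * r + rhoI L (r : ℤ) c

/-- The recursively defined three-dimensional snake ordering
`m_S^{3D}(c,r,p) = ρ^{(L²)}_p(m_S^{2D}(r,c)) + L²·p`. -/
def mS3rec (L c r p : ℕ) : ℕ := rhoI (L ^ 2) (p : ℤ) (mS2 L r c) + L ^ 2 * p

/-- The closed form `m_S^{3D}(c,r,p) = ρ^{(L)}_{p+r}(c) + L·ρ^{(L)}_p(r) + L²·p`. -/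
def mS3closed (L c r p : ℕ) : ℕ :=
  rhoI L ((p : ℤ) + (r : ℤ)) c + L * rhoI L (p : ℤ) r + L ^ 2 * p

/-!
`ρ_p` is the identity or the reflection `c ↦ w−1−c` of `{0,…,w−1}` according to the parity
of `p`, so `ρ_p ∘ ρ_r = ρ_{p+r}`. Reflecting the mixed-radix number `L·r + d` (digits `r, d < L`)
inside `{0,…,L²−1}` reflects both digits, so `ρ^{(L²)}_p(L·r + d) = L·ρ^{(L)}_p(r) + ρ^{(L)}_p(d)`;
taking `d = ρ^{(L)}_r(c)` gives the identity.
-/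

section Reflection

variable {w : ℕ} {p r : ℤ} {c : ℕ}

theorem rhoI_of_even (hp : Even p) : rhoI w p c = c := if_pos hp

theorem rhoI_of_odd (hp : Odd p) : rhoI w p c = w - 1 - c :=
  if_neg (Int.not_even_iff_odd.mpr hp)

theorem rhoI_lt (hc : c < w) : rhoI w p c < w := by
  rcases Int.even_or_odd p with hp | hp
  · rwa [rhoI_of_even hp]
  · rw [rhoI_of_odd hp]; omega

theorem rhoI_rhoI (hc : c < w) : rhoI w p (rhoI w r c) = rhoI w (p + r) c := by
  rcases Int.even_or_odd p with hp | hp <;> rcases Int.even_or_odd r with hr | hr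
  · rw [rhoI_of_even hp, rhoI_of_even hr, rhoI_of_even (hp.add hr)]
  · rw [rhoI_of_even hp, rhoI_of_odd hr, rhoI_of_odd (hp.add_odd hr)]
  · rw [rhoI_of_odd hp, rhoI_of_even hr, rhoI_of_odd (hp.add_even hr)]
  · rw [rhoI_of_odd hp, rhoI_of_odd hr, rhoI_of_even (hp.add_odd hr)]; omega

end Reflection

theorem mul_sub_one_sub_mul_add {m n r d : ℕ} (hr : r < m) (hd : d < n) :
    n * m - 1 - (n * r + d) = n * (m - 1 - r) + (n - 1 - d) := by
  obtain ⟨k, rfl⟩ : ∃ k, m = r + 1 + k := ⟨m - (r + 1), by omega⟩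
  rw [show r + 1 + k - 1 - r = k by omega, Nat.mul_add, Nat.mul_add, Nat.mul_one]
  omega

theorem rhoI_mul_add {m n r d : ℕ} (p : ℤ) (hr : r < m) (hd : d < n) :
    rhoI (n * m) p (n * r + d) = n * rhoI m p r + rhoI n p d := by
  rcases Int.even_or_odd p with hp | hp
  · simp only [rhoI_of_even hp]
  · simp only [rhoI_of_odd hp]
    exact mul_sub_one_sub_mul_add hr hd

theorem rhoI_sq_mul_add_rhoI {L r c : ℕ} (p : ℤ) (hr : r < L) (hc : c < L) :
    rhoI (L ^ 2) p (L * r + rhoI L (r : ℤ) c) = L * rhoI L p r + rhoI L (p + (r : ℤ)) c := by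
  rw [sq, rhoI_mul_add p hr (rhoI_lt hc), rhoI_rhoI hc]

theorem stmt11_general (L : ℕ) (r c : ℕ) (hr : r < L) (hc : c < L) :
    (∀ p : ℤ, rhoI (L ^ 2) p (L * r + rhoI L (r : ℤ) c) =
      L * rhoI L p r + rhoI L (p + (r : ℤ)) c) ∧
    (∀ p : ℕ, p < L → mS3rec L c r p = mS3closed L c r p) := by
  refine ⟨fun p => rhoI_sq_mul_add_rhoI p hr hc, fun p _ => ?_⟩
  rw [mS3rec, mS3closed, mS2, rhoI_sq_mul_add_rhoI p hr hc]
  ring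

/-- The composition identity `ρ^{(L²)}_p(L·r + ρ^{(L)}_r(c)) = L·ρ^{(L)}_p(r) +
ρ^{(L)}_{p+r}(c)` for any integer subscript `p`; in particular, the recursively
defined three-dimensional snake ordering admits the stated closed form. -/
theorem stmt11 (L : ℕ) (hL : 1 ≤ L) (r c : ℕ) (hr : r < L) (hc : c < L) :
    (∀ p : ℤ, rhoI (L ^ 2) p (L * r + rhoI L (r : ℤ) c) =
      L * rhoI L p r + rhoI L (p + (r : ℤ)) c) ∧
    (∀ p : ℕ, p < L → mS3rec L c r p = mS3closed L c r p) :=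
  stmt11_general L r c hr hc
end

section
/- Let m, n ≥ 1. Every permutation P of the grid Fin m × Fin n factors as P = P_X' ∘ P_Y ∘ P_X, where P_X and P_X' are row permutations (they fix the first coordinate of every point, permuting points only within each row) and P_Y is a column permutation (it fixes the second coordinate of every point, permuting points only within each column). -/
/-!
Colour every cell `p` of the grid by `c p : Fin n` so that colours are distinct along each source
row `p.1` and along each target row `(P p).1`. This is König's edge-colouring theorem for the
`n`-regular bipartite multigraph whose edges are the cells, joining `p.1` to `(P p).1`, proved by
induction on `n`: Hall's theorem yields a perfect matching, which receives a fresh colour, and the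
remaining `(n - 1)`-regular multigraph is coloured inductively. Then `PX` moves each cell within
its row to the column of its colour, `PY` moves each cell within its column to its target row
(a bijection by the colouring property), and `PX'` puts it in its final place within that row.
-/

open Finset Function

section Coloring

variable {ι : Type*} {n : ℕ}

/-- Row `i` of `ι × Fin (n + 1)` is split into the cell `(i, j i)` and a copy of `Fin n`. -/
noncomputable def rowSplit (j : ι → Fin (n + 1)) : ι ⊕ ι × Fin n ≃ ι × Fin (n + 1) :=
  Equiv.ofBijective (Sum.elim (fun i => (i, j i)) fun p => (p.1, (j p.1).succAbove p.2)) (by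
    refine ⟨Injective.sumElim (fun _ _ h => congrArg Prod.fst h) ?_ ?_, ?_⟩
    · rintro ⟨i, l⟩ ⟨i', l'⟩ h
      simp only [Prod.mk.injEq] at h
      obtain ⟨rfl, h⟩ := h
      rw [Fin.succAbove_right_injective h]
    · rintro i ⟨i', l⟩ h
      simp only [Prod.mk.injEq] at h
      obtain ⟨rfl, h⟩ := h
      exact Fin.succAbove_ne _ _ h.symm
    · rintro ⟨i, l⟩
      by_cases h : l = j i
      · exact ⟨.inl i, by rw [h]; rfl⟩
      · obtain ⟨l', rfl⟩ := Fin.exists_succAbove_eq h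
        exact ⟨.inr (i, l'), rfl⟩)

@[simp]
theorem rowSplit_inl (j : ι → Fin (n + 1)) (i : ι) : rowSplit j (.inl i) = (i, j i) := rfl

@[simp]
theorem rowSplit_inr (j : ι → Fin (n + 1)) (p : ι × Fin n) :
    rowSplit j (.inr p) = (p.1, (j p.1).succAbove p.2) := rfl

noncomputable def extendColoring (j : ι → Fin (n + 1)) (c : ι × Fin n → Fin n) :
    ι × Fin (n + 1) → Fin (n + 1) :=
  Sum.elim (fun _ => Fin.last n) (fun p => (c p).castSucc) ∘ (rowSplit j).symm

theorem injective_extendColoring {β : Type*} (a : ι × Fin (n + 1) → β) {j : ι → Fin (n + 1)}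
    (ha : Injective fun i => a (i, j i)) {c : ι × Fin n → Fin n}
    (hc : Injective fun p => (a (rowSplit j (.inr p)), c p)) :
    Injective fun p => (a p, extendColoring j c p) := by
  rw [← (rowSplit j).injective_comp]
  have hsplit : (fun p => (a p, extendColoring j c p)) ∘ rowSplit j =
      Sum.elim (fun i => (a (i, j i), Fin.last n))
        (fun p => (a (rowSplit j (.inr p)), (c p).castSucc)) := by
    ext1 x
    simp only [comp_apply, extendColoring, Equiv.symm_apply_apply]
    cases x <;> rfl
  rw [hsplit]
  refine Injective.sumElim (fun _ _ h => ha (congrArg Prod.fst h)) (fun _ _ h => hc ?_) ?_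
  · simpa using h
  · exact fun _ _ h => (Fin.castSucc_lt_last _).ne' (congrArg Prod.snd h)

variable [Fintype ι] [DecidableEq ι]

theorem exists_injective_of_card_fiber_le {κ : Type*} [Fintype κ] [Nonempty κ]
    (f : ι × κ → ι) (hf : ∀ k, #{p | f p = k} ≤ Fintype.card κ) :
    ∃ j : ι → κ, Injective fun i => f (i, j i) := by
  let A : ι → Finset ι := fun i => univ.image fun l => f (i, l)
  have hall : ∀ S : Finset ι, #S ≤ #(S.biUnion A) := by
    intro S
    have hmaps : ∀ p ∈ S ×ˢ univ, f p ∈ S.biUnion A := fun p hp =>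
      mem_biUnion.2 ⟨p.1, (mem_product.1 hp).1, mem_image_of_mem _ (mem_univ p.2)⟩
    have hcount := card_le_mul_card_image_of_maps_to hmaps (Fintype.card κ) fun k _ =>
      (card_le_card (filter_subset_filter _ (subset_univ _))).trans (hf k)
    rw [card_product, card_univ, mul_comm] at hcount
    exact Nat.le_of_mul_le_mul_left hcount Fintype.card_pos
  obtain ⟨g, hg, hgA⟩ := (all_card_le_biUnion_card_iff_exists_injective A).1 hall
  choose j _ hj using fun i => mem_image.1 (hgA i)
  exact ⟨j, by simpa only [hj] using hg⟩

theorem card_fiber_rowSplit_inr_le (f : ι × Fin (n + 1) → ι) (hf : ∀ k, #{p | f p = k} ≤ n + 1)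
    {j : ι → Fin (n + 1)} (hj : Injective fun i => f (i, j i)) (k : ι) :
    #{p | f (rowSplit j (.inr p)) = k} ≤ n := by
  obtain ⟨i, hi⟩ := Finite.surjective_of_injective hj k
  have hsplit : #{x | f (rowSplit j x) = k} =
      #{i | f (i, j i) = k} + #{p | f (rowSplit j (.inr p)) = k} := by
    simp only [card_filter, Fintype.sum_sum_type, rowSplit_inl]
    rfl
  have hmatched : 0 < #{i | f (i, j i) = k} := card_pos.2 ⟨i, by simpa using hi⟩
  have := hf k
  rw [← card_equiv (rowSplit j) (s := {x | f (rowSplit j x) = k}) (by simp), hsplit] at this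
  omega

theorem exists_coloring_of_card_fiber_le (f : ι × Fin n → ι) (hf : ∀ k, #{p | f p = k} ≤ n) :
    ∃ c : ι × Fin n → Fin n,
      Injective (fun p => (p.1, c p)) ∧ Injective (fun p => (f p, c p)) := by
  induction n with
  | zero => exact ⟨Prod.snd, injective_of_subsingleton _, injective_of_subsingleton _⟩
  | succ n ih =>
    obtain ⟨j, hj⟩ := exists_injective_of_card_fiber_le f (by simpa using hf)
    obtain ⟨c, hrow, hcol⟩ := ih _ (card_fiber_rowSplit_inr_le f hf hj)
    exact ⟨extendColoring j c, injective_extendColoring Prod.fst (fun _ _ h => h) hrow,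
      injective_extendColoring f hj hcol⟩

end Coloring

theorem card_filter_fst_perm_eq {ι κ : Type*} [Fintype ι] [DecidableEq ι] [Fintype κ]
    (P : Equiv.Perm (ι × κ)) (k : ι) : #{p | (P p).1 = k} = Fintype.card κ := by
  rw [card_equiv P (t := {k} ×ˢ univ), card_product, card_singleton, card_univ, one_mul]
  simp only [mem_filter, mem_univ, true_and, mem_product, mem_singleton, and_true, implies_true]

theorem exists_row_col_row_factorization {ι κ : Type*} [Finite ι] [Finite κ]
    (P : Equiv.Perm (ι × κ)) (c : ι × κ → κ)
    (hrow : Injective fun p => (p.1, c p)) (hcol : Injective fun p => ((P p).1, c p)) :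
    ∃ PX PX' PY : Equiv.Perm (ι × κ),
      (∀ p, (PX p).1 = p.1) ∧ (∀ p, (PX' p).1 = p.1) ∧
      (∀ p, (PY p).2 = p.2) ∧
      (∀ p, P p = PX' (PY (PX p))) := by
  let ψ := Equiv.ofBijective _ hrow.bijective_of_finite
  let θ := Equiv.ofBijective ((fun p => ((P p).1, c p)) ∘ ψ.symm)
    ((ψ.symm.injective_comp _).2 hcol).bijective_of_finite
  refine ⟨ψ, (θ.symm.trans ψ.symm).trans P, θ, fun _ => rfl, fun q => ?_, fun q => ?_, fun p => ?_⟩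
  · show (P (ψ.symm (θ.symm q))).1 = q.1
    exact (Prod.ext_iff.1 (θ.apply_symm_apply q)).1
  · show c (ψ.symm q) = q.2
    exact congrArg Prod.snd (ψ.apply_symm_apply q)
  · show P p = P (ψ.symm (θ.symm (θ (ψ p))))
    rw [θ.symm_apply_apply, ψ.symm_apply_apply]

theorem stmt14_general (m n : ℕ)
    (P : Equiv.Perm (Fin m × Fin n)) :
    ∃ PX PX' PY : Equiv.Perm (Fin m × Fin n),
      (∀ p, (PX p).1 = p.1) ∧ (∀ p, (PX' p).1 = p.1) ∧
      (∀ p, (PY p).2 = p.2) ∧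
      (∀ p, P p = PX' (PY (PX p))) := by
  obtain ⟨c, hrow, hcol⟩ := exists_coloring_of_card_fiber_le (fun p => (P p).1)
    fun k => (card_filter_fst_perm_eq P k).trans_le (Fintype.card_fin n).le
  exact exists_row_col_row_factorization P c hrow hcol

/-- Row–column–row decomposition of lattice permutations: every permutation `P` of
the grid `Fin m × Fin n` factors as `P = P_X' ∘ P_Y ∘ P_X`, where `P_X`, `P_X'`
are row permutations (fixing the first coordinate of every point) and `P_Y` is a
column permutation (fixing the second coordinate of every point). -/
theorem stmt14 (m n : ℕ) (hm : 1 ≤ m) (hn : 1 ≤ n)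
    (P : Equiv.Perm (Fin m × Fin n)) :
    ∃ PX PX' PY : Equiv.Perm (Fin m × Fin n),
      (∀ p, (PX p).1 = p.1) ∧ (∀ p, (PX' p).1 = p.1) ∧
      (∀ p, (PY p).2 = p.2) ∧
      (∀ p, P p = PX' (PY (PX p))) :=
  stmt14_general m n P
end

section
/- Let a ≥ 1 be a natural number and let C ≥ 0 and x ≥ 1 be real numbers. Then there exists a real number y with 1 ≤ y ≤ x such that (x/y) · ( x + C·y^{(a+1)/a} ) ≤ (1 + C) · x^{(a+2)/(a+1)}; indeed y = x^{a/(a+1)} achieves equality. (This is the inductive optimization step showing that fermion routing on fully connected qubit systems, implemented by recursively treating the system as a d-dimensional lattice, achieves depth O(log^{(a+1)/a} N) for every a, approaching O(log N).) -/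
open Real

lemma div_rpow_mul_add_mul_rpow_rpow_inv {x : ℝ} (hx : 0 < x) {p : ℝ} (hp : p ≠ 0) (C : ℝ) :
    x / x ^ p * (x + C * (x ^ p) ^ p⁻¹) = (1 + C) * x ^ (2 - p) := by
  rw [rpow_rpow_inv hx.le hp, rpow_sub hx, show (2 : ℝ) = 1 + 1 by norm_num,
    rpow_add hx, rpow_one]
  ring

theorem stmt15_general (a : ℕ) (ha : 1 ≤ a) (C x : ℝ) (hx : 1 ≤ x) :
    ∃ y : ℝ, 1 ≤ y ∧ y ≤ x ∧
      (x / y) * (x + C * y ^ (((a : ℝ) + 1) / (a : ℝ)))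
        ≤ (1 + C) * x ^ (((a : ℝ) + 2) / ((a : ℝ) + 1)) ∧
      y = x ^ ((a : ℝ) / ((a : ℝ) + 1)) ∧
      (x / y) * (x + C * y ^ (((a : ℝ) + 1) / (a : ℝ)))
        = (1 + C) * x ^ (((a : ℝ) + 2) / ((a : ℝ) + 1)) := by
  have ha₀ : (0 : ℝ) < a := by exact_mod_cast ha
  set p : ℝ := (a : ℝ) / ((a : ℝ) + 1)
  have hp₀ : 0 < p := by positivity
  have hp₁ : p ≤ 1 := (div_le_one (by positivity)).2 (by linarith)
  have hp_inv : p⁻¹ = ((a : ℝ) + 1) / a := inv_div _ _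
  have h_exp : 2 - p = ((a : ℝ) + 2) / ((a : ℝ) + 1) := by simp only [p]; field_simp; ring
  have h_cost := div_rpow_mul_add_mul_rpow_rpow_inv (zero_lt_one.trans_le hx) hp₀.ne' C
  rw [hp_inv, h_exp] at h_cost
  exact ⟨x ^ p, one_le_rpow hx hp₀.le, rpow_le_self_of_one_le hx hp₁, h_cost.le, rfl, h_cost⟩

/-- Inductive optimization step for fermion routing on fully connected qubit
systems: for `a ≥ 1`, `C ≥ 0` and `x ≥ 1`, some `y` with `1 ≤ y ≤ x` satisfies
`(x/y)·(x + C·y^{(a+1)/a}) ≤ (1+C)·x^{(a+2)/(a+1)}`; indeed `y = x^{a/(a+1)}`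
achieves equality. -/
theorem stmt15 (a : ℕ) (ha : 1 ≤ a) (C x : ℝ) (hC : 0 ≤ C) (hx : 1 ≤ x) :
    ∃ y : ℝ, 1 ≤ y ∧ y ≤ x ∧
      (x / y) * (x + C * y ^ (((a : ℝ) + 1) / (a : ℝ)))
        ≤ (1 + C) * x ^ (((a : ℝ) + 2) / ((a : ℝ) + 1)) ∧
      y = x ^ ((a : ℝ) / ((a : ℝ) + 1)) ∧
      (x / y) * (x + C * y ^ (((a : ℝ) + 1) / (a : ℝ)))
        = (1 + C) * x ^ (((a : ℝ) + 2) / ((a : ℝ) + 1)) :=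
  stmt15_general a ha C x hx
end

section
/- Let n ≥ 1. For every permutation π of Fin n there exist permutations τ₁, τ₂, …, τ_n of Fin n such that π = τ_n ∘ ⋯ ∘ τ₂ ∘ τ₁, and each τ_k is a product of disjoint adjacent transpositions of alternating parity: τ_k moves an element i only to i−1 or i+1, the swapped pairs within each round are pairwise disjoint, and in round k only pairs (i, i+1) with i ≡ k (mod 2) are swapped. (Correctness of odd–even transposition sorting: any permutation on a line of n sites can be routed in at most n rounds of parallel nearest-neighbor swaps, which bounds the worst-case depth of one-dimensional fermionic swap networks used as the row and column subroutines of the fermion routing algorithm.) -/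
/-!
Odd–even transposition sort. Run compare-exchange rounds of alternating parity on the values of
`π`, recording each round as the involution `τ_k` that swaps the out-of-order pairs. After `n`
rounds the values are sorted, so `π τ₁ ⋯ τ_n = 1` and `π = τ_n ⋯ τ₁`.

Rounds commute with monotone maps, so thresholding reduces sortedness to 0-1 arrays (the 0-1
principle). There, the `j`-th one from the right starts moving right by round `j + 1` and is never
blocked afterwards, so after `t` rounds it has reached position `min n t - j`.
-/

open Finset

theorem Equiv.Perm.eq_one_of_monotone {α : Type*} [LinearOrder α] [WellFoundedLT α]
    {g : Equiv.Perm α} (hg : Monotone g) : g = 1 := by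
  have h := Subsingleton.elim
    ((hg.strictMono_of_injective g.injective).orderIsoOfSurjective g g.surjective) (OrderIso.refl α)
  exact Equiv.ext fun x => DFunLike.congr_fun h x

namespace OddEvenSort

def IsPairStart (n r i : ℕ) : Prop := i % 2 = r % 2 ∧ i + 1 < n

def IsPairEnd (n r i : ℕ) : Prop := 0 < i ∧ IsPairStart n r (i - 1)

instance (n r : ℕ) : DecidablePred (IsPairStart n r) :=
  fun _ => inferInstanceAs (Decidable (_ ∧ _))

instance (n r : ℕ) : DecidablePred (IsPairEnd n r) :=
  fun _ => inferInstanceAs (Decidable (_ ∧ _))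

section Pairs

variable {n r i : ℕ}

@[simp] lemma isPairEnd_succ_iff : IsPairEnd n r (i + 1) ↔ IsPairStart n r i := by
  simp [IsPairEnd]

lemma not_isPairEnd_zero : ¬ IsPairEnd n r 0 := fun h => h.1.false

lemma IsPairStart.not_succ (h : IsPairStart n r i) : ¬ IsPairStart n r (i + 1) := by
  unfold IsPairStart at *; omega

lemma IsPairStart.not_isPairEnd (h : IsPairStart n r i) : ¬ IsPairEnd n r i := by
  unfold IsPairEnd IsPairStart at *; omega

lemma not_isPairStart_of_le (h : n ≤ i) : ¬ IsPairStart n r i := by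
  unfold IsPairStart; omega

lemma not_isPairEnd_of_le (h : n ≤ i) : ¬ IsPairEnd n r i := by
  unfold IsPairEnd IsPairStart; omega

end Pairs

section CompareExchange

variable {α : Type*} [LinearOrder α] (n r : ℕ)

def compareExchange (a : ℕ → α) (i : ℕ) : α :=
  if IsPairStart n r i then min (a i) (a (i + 1))
  else if IsPairEnd n r i then max (a (i - 1)) (a i)
  else a i

variable {n r} {a : ℕ → α} {i : ℕ}

lemma compareExchange_of_isPairStart (h : IsPairStart n r i) :
    compareExchange n r a i = min (a i) (a (i + 1)) := if_pos h

lemma compareExchange_succ_of_isPairStart (h : IsPairStart n r i) :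
    compareExchange n r a (i + 1) = max (a i) (a (i + 1)) := by
  rw [compareExchange, if_neg h.not_succ, if_pos (isPairEnd_succ_iff.2 h), Nat.add_sub_cancel]

lemma compareExchange_of_not (h₁ : ¬ IsPairStart n r i) (h₂ : ¬ IsPairEnd n r i) :
    compareExchange n r a i = a i := by
  rw [compareExchange, if_neg h₁, if_neg h₂]

lemma Monotone.comp_compareExchange {β : Type*} [LinearOrder β] {f : α → β} (hf : Monotone f)
    (a : ℕ → α) : f ∘ compareExchange n r a = compareExchange n r (f ∘ a) := by
  funext i
  simp only [Function.comp_apply, compareExchange]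
  split_ifs <;> simp [hf.map_min, hf.map_max]

end CompareExchange

section Sums

variable {M : Type*} [AddCommMonoid M] [LinearOrder M] {n r : ℕ} {a : ℕ → M}

lemma sum_Ico_compareExchange {y : ℕ} (hy : ¬ IsPairEnd n r y) :
    ∑ i ∈ Ico y n, compareExchange n r a i = ∑ i ∈ Ico y n, a i := by
  by_cases hyn : y < n
  · by_cases hs : IsPairStart n r y
    · have hy1 : y + 1 < n := hs.2
      rw [sum_eq_sum_Ico_succ_bot hyn, sum_eq_sum_Ico_succ_bot hy1,
        sum_eq_sum_Ico_succ_bot hyn, sum_eq_sum_Ico_succ_bot hy1,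
        compareExchange_of_isPairStart hs, compareExchange_succ_of_isPairStart hs,
        sum_Ico_compareExchange (y := y + 2) (by simpa using hs.not_succ),
        ← add_assoc, ← add_assoc, min_add_max]
    · rw [sum_eq_sum_Ico_succ_bot hyn, sum_eq_sum_Ico_succ_bot hyn,
        compareExchange_of_not hs hy, sum_Ico_compareExchange (y := y + 1) (by simpa using hs)]
  · simp [Ico_eq_empty_of_le (not_lt.1 hyn)]
termination_by n - y

lemma sum_Ico_succ_compareExchange {y : ℕ} (hy : IsPairStart n r y) :
    ∑ i ∈ Ico (y + 1) n, compareExchange n r a i =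
      max (a y) (a (y + 1)) + ∑ i ∈ Ico (y + 2) n, a i := by
  rw [sum_eq_sum_Ico_succ_bot hy.2, compareExchange_succ_of_isPairStart hy,
    sum_Ico_compareExchange (by simpa using hy.not_succ)]

lemma sum_Ico_le_sum_Ico_compareExchange [IsOrderedAddMonoid M] (y : ℕ) :
    ∑ i ∈ Ico y n, a i ≤ ∑ i ∈ Ico y n, compareExchange n r a i := by
  by_cases hy : IsPairEnd n r y
  · obtain ⟨k, rfl⟩ : ∃ k, y = k + 1 := ⟨y - 1, by have := hy.1; omega⟩
    have hk := isPairEnd_succ_iff.1 hy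
    rw [sum_Ico_succ_compareExchange hk, sum_eq_sum_Ico_succ_bot hk.2]
    exact add_le_add_left (le_max_right _ _) _
  · exact (sum_Ico_compareExchange hy).ge

end Sums

section ZeroOne

def onesFrom (n : ℕ) (c : ℕ → Bool) (y : ℕ) : ℕ := ∑ i ∈ Ico y n, (c i).toNat

variable {n r y : ℕ} {c : ℕ → Bool}

lemma onesFrom_of_le (h : n ≤ y) : onesFrom n c y = 0 := by
  simp [onesFrom, Ico_eq_empty_of_le h]

lemma onesFrom_eq_add (h : y < n) : onesFrom n c y = (c y).toNat + onesFrom n c (y + 1) :=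
  sum_eq_sum_Ico_succ_bot h _

lemma onesFrom_le_sub : onesFrom n c y ≤ n - y := by
  calc onesFrom n c y ≤ ∑ _i ∈ Ico y n, 1 := sum_le_sum fun i _ => Bool.toNat_le (c i)
    _ = n - y := by simp

lemma onesFrom_le_onesFrom_zero : onesFrom n c y ≤ onesFrom n c 0 :=
  sum_le_sum_of_subset (Ico_subset_Ico (Nat.zero_le y) le_rfl)

lemma onesFrom_compareExchange_eq_sum :
    onesFrom n (compareExchange n r c) y =
      ∑ i ∈ Ico y n, compareExchange n r (Bool.toNat ∘ c) i := by
  rw [← Monotone.comp_compareExchange (fun _ _ h => Bool.toNat_le_toNat h) c]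
  rfl

lemma onesFrom_compareExchange (hy : ¬ IsPairEnd n r y) :
    onesFrom n (compareExchange n r c) y = onesFrom n c y := by
  rw [onesFrom_compareExchange_eq_sum, sum_Ico_compareExchange hy]; rfl

lemma onesFrom_succ_compareExchange (hy : IsPairStart n r y) :
    onesFrom n (compareExchange n r c) (y + 1) =
      max (c y).toNat (c (y + 1)).toNat + onesFrom n c (y + 2) := by
  rw [onesFrom_compareExchange_eq_sum, sum_Ico_succ_compareExchange hy]; rfl

lemma onesFrom_le_onesFrom_compareExchange :
    onesFrom n c y ≤ onesFrom n (compareExchange n r c) y := by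
  rw [onesFrom_compareExchange_eq_sum]
  exact sum_Ico_le_sum_Ico_compareExchange y

/-- After `t` rounds, every one of rank at most `t` from the right that has not yet joined the
packed block of ones at the right end is about to move right in round `t + 1`. -/
def OnesPoised (n t : ℕ) (c : ℕ → Bool) : Prop :=
  ∀ i, c i = true → onesFrom n c i ≤ t → onesFrom n c i < n - i → IsPairStart n (t + 1) i

/-- After `t` rounds, the `j`-th one from the right is at position at least `min n t - j`. -/
def OnesAdvanced (n t : ℕ) (c : ℕ → Bool) : Prop :=
  ∀ y, min (onesFrom n c 0) (min n t - y) ≤ onesFrom n c y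

lemma onesPoised_zero : OnesPoised n 0 c := by
  intro i hi hrank hfree
  have := onesFrom_eq_add (c := c) (by omega : i < n)
  simp only [hi, Bool.toNat_true] at this
  omega

lemma onesAdvanced_zero : OnesAdvanced n 0 c := by
  intro y; simp

lemma onesPoised_compareExchange {t : ℕ} (h : OnesPoised n t c) :
    OnesPoised n (t + 1) (compareExchange n (t + 1) c) := by
  intro i hi hrank hfree
  set c' := compareExchange n (t + 1) c
  have hi1 : i + 1 < n := by
    by_contra hi1
    have := onesFrom_eq_add (c := c') (by omega : i < n)
    rw [hi, onesFrom_of_le (y := i + 1) (by omega)] at this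
    simp only [Bool.toNat_true, add_zero] at this
    omega
  by_contra hns
  have hs : IsPairStart n (t + 1) i := by unfold IsPairStart at *; omega
  have hboth : c i = true ∧ c (i + 1) = true := by
    simpa [c', compareExchange_of_isPairStart hs] using hi
  have hsame : onesFrom n c' i = onesFrom n c i := onesFrom_compareExchange hs.not_isPairEnd
  have hci := onesFrom_eq_add (c := c) (by omega : i < n)
  have hci1 := onesFrom_eq_add (c := c) hi1
  rw [hboth.1] at hci
  rw [hboth.2] at hci1
  simp only [Bool.toNat_true] at hci hci1
  exact hs.not_succ (h (i + 1) hboth.2 (by omega) (by omega))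

lemma onesAdvanced_compareExchange {t : ℕ} (hA : OnesPoised n t c) (hB : OnesAdvanced n t c) :
    OnesAdvanced n (t + 1) (compareExchange n (t + 1) c) := by
  intro y
  have h0 : onesFrom n (compareExchange n (t + 1) c) 0 = onesFrom n c 0 :=
    onesFrom_compareExchange not_isPairEnd_zero
  have hmono : onesFrom n c y ≤ onesFrom n (compareExchange n (t + 1) c) y :=
    onesFrom_le_onesFrom_compareExchange
  rw [h0]
  by_cases hold : min (onesFrom n c 0) (min n (t + 1) - y) ≤ min (onesFrom n c 0) (min n t - y)
  · exact hold.trans ((hB y).trans hmono)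
  obtain _ | q := y
  · omega
  have hq := hB q
  have htn : t + 1 ≤ n := by omega
  by_cases hq1 : t - q ≤ onesFrom n c (q + 1)
  · omega
  have hcq := onesFrom_eq_add (c := c) (by omega : q < n)
  have hcq1 : onesFrom n c (q + 1) = _ + onesFrom n c (q + 2) :=
    onesFrom_eq_add (c := c) (by omega : q + 1 < n)
  have hq_true : c q = true := by
    cases h : c q
    · simp only [h, Bool.toNat_false, zero_add] at hcq; omega
    · rfl
  rw [hq_true, Bool.toNat_true] at hcq
  have hs : IsPairStart n (t + 1) q := hA q hq_true (by omega) (by omega)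
  have hq1_false : c (q + 1) = false := by
    cases h : c (q + 1)
    · rfl
    · exact absurd (hA (q + 1) h (by omega) (by omega)) hs.not_succ
  have hstep : onesFrom n (compareExchange n (t + 1) c) (q + 1) = _ :=
    onesFrom_succ_compareExchange hs
  rw [hq_true, hq1_false] at hstep
  rw [hq1_false] at hcq1
  simp only [Bool.toNat_true, Bool.toNat_false, zero_le, sup_of_le_left, zero_add] at hstep hcq1
  omega

lemma OnesAdvanced.sorted (h : OnesAdvanced n n c) {i : ℕ} (hi : i + 1 < n)
    (hci : c i = true) : c (i + 1) = true := by
  by_contra hci1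
  have h1 := onesFrom_eq_add (c := c) (by omega : i < n)
  have h2 : onesFrom n c (i + 1) = _ + onesFrom n c (i + 2) := onesFrom_eq_add hi
  rw [hci] at h1
  rw [Bool.eq_false_iff.2 hci1] at h2
  have := h (i + 1)
  have : onesFrom n c i ≤ onesFrom n c 0 := onesFrom_le_onesFrom_zero
  have : onesFrom n c (i + 2) ≤ n - (i + 2) := onesFrom_le_sub
  simp only [Bool.toNat_true, Bool.toNat_false, zero_add] at h1 h2
  omega

end ZeroOne

section Rounds

variable {α : Type*} [LinearOrder α] (n : ℕ)

def oddEvenRounds (a : ℕ → α) : ℕ → ℕ → α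
  | 0 => a
  | t + 1 => compareExchange n (t + 1) (oddEvenRounds a t)

variable {n}

lemma Monotone.comp_oddEvenRounds {β : Type*} [LinearOrder β] {f : α → β} (hf : Monotone f)
    (a : ℕ → α) (t : ℕ) : f ∘ oddEvenRounds n a t = oddEvenRounds n (f ∘ a) t := by
  induction t with
  | zero => rfl
  | succ t ih => rw [oddEvenRounds, Monotone.comp_compareExchange hf, ih]; rfl

lemma onesPoised_and_onesAdvanced_oddEvenRounds (c : ℕ → Bool) (t : ℕ) :
    OnesPoised n t (oddEvenRounds n c t) ∧ OnesAdvanced n t (oddEvenRounds n c t) := by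
  induction t with
  | zero => exact ⟨onesPoised_zero, onesAdvanced_zero⟩
  | succ t ih => exact ⟨onesPoised_compareExchange ih.1, onesAdvanced_compareExchange ih.1 ih.2⟩

theorem oddEvenRounds_le_succ (a : ℕ → α) {i : ℕ} (hi : i + 1 < n) :
    oddEvenRounds n a n i ≤ oddEvenRounds n a n (i + 1) := by
  set v := oddEvenRounds n a n i
  have hf : Monotone fun x => decide (v ≤ x) := fun x y hxy =>
    Bool.le_iff_imp.2 (by simpa using fun hvx => hvx.trans hxy)
  have hsorted :=
    (onesPoised_and_onesAdvanced_oddEvenRounds ((fun x => decide (v ≤ x)) ∘ a) n).2.sorted hi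
  rw [← Monotone.comp_oddEvenRounds hf] at hsorted
  simpa [v] using hsorted

end Rounds

section ExchangeIndex

variable {α : Type*} [LinearOrder α] (n r : ℕ)

def exchangeIndex (a : ℕ → α) (i : ℕ) : ℕ :=
  if IsPairStart n r i ∧ a (i + 1) < a i then i + 1
  else if IsPairEnd n r i ∧ a i < a (i - 1) then i - 1
  else i

variable {n r} (a : ℕ → α) (i : ℕ)

lemma apply_exchangeIndex : a (exchangeIndex n r a i) = compareExchange n r a i := by
  unfold exchangeIndex compareExchange IsPairEnd IsPairStart
  split_ifs <;> grind

lemma exchangeIndex_exchangeIndex : exchangeIndex n r a (exchangeIndex n r a i) = i := by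
  unfold exchangeIndex IsPairEnd IsPairStart
  split_ifs <;> grind

lemma exchangeIndex_eq_or : exchangeIndex n r a i = i ∨ exchangeIndex n r a i = i + 1 ∨
    i = exchangeIndex n r a i + 1 := by
  unfold exchangeIndex IsPairEnd
  split_ifs <;> omega

variable {a i}

lemma exchangeIndex_lt (hi : i < n) : exchangeIndex n r a i < n := by
  unfold exchangeIndex IsPairStart
  split_ifs <;> omega

lemma mod_two_eq_of_exchangeIndex_eq_succ (h : exchangeIndex n r a i = i + 1) :
    i % 2 = r % 2 := by
  unfold exchangeIndex IsPairEnd at h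
  split_ifs at h with h₁ <;> first | exact h₁.1.1 | omega

end ExchangeIndex

section Permutations

open Equiv

variable {n : ℕ}

-- Extended by the identity, so that sortedness on `[0, n)` is monotonicity on `ℕ`.
def natValues (g : Perm (Fin n)) (i : ℕ) : ℕ := if h : i < n then g ⟨i, h⟩ else i

lemma natValues_of_lt (g : Perm (Fin n)) (i : Fin n) : natValues g i = g i := dif_pos i.2

lemma natValues_le_succ_of_le (g : Perm (Fin n)) {i : ℕ} (h : n ≤ i + 1) :
    natValues g i ≤ natValues g (i + 1) := by
  unfold natValues
  split_ifs <;> omega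

def exchangePerm (r : ℕ) (g : Perm (Fin n)) : Perm (Fin n) :=
  Function.Involutive.toPerm (fun i => ⟨exchangeIndex n r (natValues g) i, exchangeIndex_lt i.2⟩)
    fun i => Fin.ext (exchangeIndex_exchangeIndex (natValues g) i)

variable (r : ℕ) (g : Perm (Fin n))

lemma exchangePerm_apply_apply (i : Fin n) : exchangePerm r g (exchangePerm r g i) = i :=
  Fin.ext (exchangeIndex_exchangeIndex _ _)

lemma exchangePerm_apply_eq_or (i : Fin n) : exchangePerm r g i = i ∨
    (exchangePerm r g i : ℕ) = i + 1 ∨ (i : ℕ) = exchangePerm r g i + 1 := by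
  rw [Fin.ext_iff]
  exact exchangeIndex_eq_or (natValues g) i

lemma mod_two_eq_of_exchangePerm_apply_eq_succ {i : Fin n}
    (h : (exchangePerm r g i : ℕ) = i + 1) : (i : ℕ) % 2 = r % 2 :=
  mod_two_eq_of_exchangeIndex_eq_succ h

lemma exchangePerm_inv : (exchangePerm r g)⁻¹ = exchangePerm r g :=
  Function.Involutive.toPerm_symm _

lemma natValues_mul_exchangePerm :
    natValues (g * exchangePerm r g) = compareExchange n r (natValues g) := by
  funext i
  by_cases hi : i < n
  · rw [← apply_exchangeIndex, natValues, dif_pos hi, natValues, dif_pos (exchangeIndex_lt hi)]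
    rfl
  · rw [compareExchange_of_not (not_isPairStart_of_le (not_lt.1 hi))
      (not_isPairEnd_of_le (not_lt.1 hi))]
    simp [natValues, hi]

def sortState (π : Perm (Fin n)) : ℕ → Perm (Fin n)
  | 0 => π
  | t + 1 => sortState π t * exchangePerm (t + 1) (sortState π t)

def sortRound (π : Perm (Fin n)) (k : ℕ) : Perm (Fin n) := exchangePerm k (sortState π (k - 1))

variable (π : Perm (Fin n))

lemma natValues_sortState (t : ℕ) :
    natValues (sortState π t) = oddEvenRounds n (natValues π) t := by
  induction t with
  | zero => rfl
  | succ t ih => rw [sortState, natValues_mul_exchangePerm, ih, oddEvenRounds]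

lemma sortState_eq_mul_prod (t : ℕ) :
    sortState π t = π * ((List.range t).map fun k => sortRound π (k + 1)).prod := by
  induction t with
  | zero => simp [sortState]
  | succ t ih =>
    rw [sortState, List.range_succ, List.map_append, List.prod_append, ← mul_assoc, ← ih]
    simp [sortRound]

lemma sortState_self_eq_one : sortState π n = 1 := by
  have hmono : Monotone (natValues (sortState π n)) := monotone_nat_of_le_succ fun i => by
    by_cases hi : i + 1 < n
    · rw [natValues_sortState]; exact oddEvenRounds_le_succ _ hi
    · exact natValues_le_succ_of_le _ (not_lt.1 hi)
  refine Equiv.Perm.eq_one_of_monotone fun i j hij => ?_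
  simpa [natValues_of_lt] using hmono (Fin.le_def.1 hij)

end Permutations

end OddEvenSort

open OddEvenSort in
theorem stmt16_general (n : ℕ) (π : Equiv.Perm (Fin n)) :
    ∃ τ : ℕ → Equiv.Perm (Fin n),
      (∀ k, 1 ≤ k → k ≤ n →
        (∀ i, τ k (τ k i) = i) ∧
        (∀ i : Fin n, τ k i = i ∨ ((τ k i : ℕ) = (i : ℕ) + 1) ∨
          ((i : ℕ) = (τ k i : ℕ) + 1)) ∧
        (∀ i : Fin n, (τ k i : ℕ) = (i : ℕ) + 1 → (i : ℕ) % 2 = k % 2)) ∧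
      π = (((List.range n).map (fun k => τ (k + 1))).reverse).prod := by
  refine ⟨sortRound π, fun k _ _ => ⟨exchangePerm_apply_apply _ _, exchangePerm_apply_eq_or _ _,
    fun _ => mod_two_eq_of_exchangePerm_apply_eq_succ _ _⟩, ?_⟩
  have h : π * ((List.range n).map fun k => sortRound π (k + 1)).prod = 1 :=
    (sortState_eq_mul_prod π n).symm.trans (sortState_self_eq_one π)
  refine (eq_inv_of_mul_eq_one_left h).trans ?_
  rw [List.prod_inv_reverse, List.map_map]
  simp only [Function.comp_def, sortRound, exchangePerm_inv]

/-- Correctness of odd–even transposition sorting: every permutation `π` of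
`Fin n` factors as `π = τ_n ∘ ⋯ ∘ τ₂ ∘ τ₁`, where each round `τ_k` is a product of
disjoint adjacent transpositions of alternating parity: `τ_k` is an involution
moving any element `i` only to `i−1` or `i+1`, and in round `k` only pairs
`(i, i+1)` with `i ≡ k (mod 2)` are swapped. -/
theorem stmt16 (n : ℕ) (hn : 1 ≤ n) (π : Equiv.Perm (Fin n)) :
    ∃ τ : ℕ → Equiv.Perm (Fin n),
      (∀ k, 1 ≤ k → k ≤ n →
        (∀ i, τ k (τ k i) = i) ∧
        (∀ i : Fin n, τ k i = i ∨ ((τ k i : ℕ) = (i : ℕ) + 1) ∨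
          ((i : ℕ) = (τ k i : ℕ) + 1)) ∧
        (∀ i : Fin n, (τ k i : ℕ) = (i : ℕ) + 1 → (i : ℕ) % 2 = k % 2)) ∧
      π = (((List.range n).map (fun k => τ (k + 1))).reverse).prod :=
  stmt16_general n π
end
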